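/- Under the block Arnoldi relations and the projected Galerkin equation as in the standard Krylov subspace method for the Sylvester equation (with orthonormal bases U_m, V_m, U_{m+1}* U_m = 0, V_{m+1}* V_m = 0, and U_{m+1}* U_{m+1} = V_{m+1}* V_{m+1} = I), the residual R = A X̃ + X̃ B + C D* of X̃ = U_m Y V_m* has Frobenius norm satisfying ‖R‖_F² = ‖H_{m+1,m} E_m* Y‖_F² + ‖Y E_m G_{m+1,m}*‖_F². -/

import Mathlib

open Matrix
open scoped ComplexOrder

noncomputable def frobNorm {m n : Type*} [Fintype m] [Fintype n] (M : Matrix m n ℂ) : ℝ :=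
  Real.sqrt (∑ i, ∑ j, ‖M i j‖ ^ 2)

/-- The block matrix `E_m = e_m ⊗ I_s`. -/
noncomputable def Em (m s : ℕ) : Matrix (Fin m × Fin s) (Fin s) ℂ :=
  fun p j => if p.1.val = m - 1 ∧ p.2 = j then 1 else 0

/-! With `P = H_{m+1,m} E_mᴴ Y` and `Q = Y E_m G_{m+1,m}ᴴ`, the residual is
`U_{m+1} P V_mᴴ + U_m Q V_{m+1}ᴴ`, and the column spaces of the two terms are orthogonal because `U_{m+1}ᴴ U_m = 0`. Writing `‖M‖_F² = Re tr (Mᴴ M)`, the Frobenius norm obeys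
Pythagoras for such a sum and is invariant under multiplication by matrices with orthonormal
columns, which leaves `‖P‖_F² + ‖Q‖_F²`. -/

section FrobeniusNorm

variable {a b c d : Type*} [Fintype a] [Fintype b] [Fintype c] [Fintype d]

lemma frobNorm_nonneg (M : Matrix a b ℂ) : 0 ≤ frobNorm M := Real.sqrt_nonneg _

lemma frobNorm_sq_eq_re_trace (M : Matrix a b ℂ) :
    frobNorm M ^ 2 = (trace (Mᴴ * M)).re := by
  rw [frobNorm, Real.sq_sqrt (by positivity)]
  have re_star_mul_self : ∀ z : ℂ, (star z * z).re = ‖z‖ ^ 2 := fun z => by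
    rw [Complex.sq_norm, Complex.normSq_apply, Complex.star_def, Complex.mul_re]
    simp
  simp only [trace, diag, mul_apply, conjTranspose_apply, Complex.re_sum, re_star_mul_self]
  exact Finset.sum_comm

lemma frobNorm_add_sq_of_conjTranspose_mul_eq_zero {A B : Matrix a b ℂ} (hAB : Aᴴ * B = 0) :
    frobNorm (A + B) ^ 2 = frobNorm A ^ 2 + frobNorm B ^ 2 := by
  have hBA : Bᴴ * A = 0 := by simpa using congrArg conjTranspose hAB
  simp only [frobNorm_sq_eq_re_trace, conjTranspose_add, Matrix.add_mul, Matrix.mul_add, hAB, hBA,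
    add_zero, zero_add, trace_add, Complex.add_re]

lemma frobNorm_mul_mul_conjTranspose [DecidableEq c] [DecidableEq d]
    {U : Matrix a c ℂ} {V : Matrix b d ℂ} (hU : Uᴴ * U = 1) (hV : Vᴴ * V = 1)
    (M : Matrix c d ℂ) : frobNorm (U * M * Vᴴ) = frobNorm M := by
  refine (pow_left_inj₀ (frobNorm_nonneg _) (frobNorm_nonneg _) two_ne_zero).1 ?_
  have hgram : (U * M * Vᴴ)ᴴ * (U * M * Vᴴ) = V * (Mᴴ * M) * Vᴴ := by
    simp only [conjTranspose_mul, conjTranspose_conjTranspose, Matrix.mul_assoc]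
    rw [← Matrix.mul_assoc Uᴴ U, hU, Matrix.one_mul]
  rw [frobNorm_sq_eq_re_trace, frobNorm_sq_eq_re_trace, hgram, trace_mul_comm,
    ← Matrix.mul_assoc, hV, Matrix.one_mul]

end FrobeniusNorm

theorem sylvester_residual_frobenius_norm_general {n m s : ℕ}
    (Um Vm : Matrix (Fin n) (Fin m × Fin s) ℂ)
    (U1 V1 : Matrix (Fin n) (Fin s) ℂ)
    (Y : Matrix (Fin m × Fin s) (Fin m × Fin s) ℂ)
    (H1 G1 : Matrix (Fin s) (Fin s) ℂ)
    (R : Matrix (Fin n) (Fin n) ℂ)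
    (hUm : Umᴴ * Um = 1) (hVm : Vmᴴ * Vm = 1)
    (hU1 : U1ᴴ * U1 = 1) (hV1 : V1ᴴ * V1 = 1)
    (hUorth : U1ᴴ * Um = 0)
    (hR : R = U1 * H1 * (Em m s)ᴴ * Y * Vmᴴ + Um * Y * (Em m s) * G1ᴴ * V1ᴴ) :
    frobNorm R ^ 2
      = frobNorm (H1 * (Em m s)ᴴ * Y) ^ 2 + frobNorm (Y * (Em m s) * G1ᴴ) ^ 2 := by
  set P := H1 * (Em m s)ᴴ * Y
  set Q := Y * (Em m s) * G1ᴴ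
  have hR' : R = U1 * P * Vmᴴ + Um * Q * V1ᴴ := by
    simp only [hR, P, Q, Matrix.mul_assoc]
  have horth : (U1 * P * Vmᴴ)ᴴ * (Um * Q * V1ᴴ) = 0 := by
    simp only [conjTranspose_mul, conjTranspose_conjTranspose, Matrix.mul_assoc]
    rw [← Matrix.mul_assoc U1ᴴ Um, hUorth, Matrix.zero_mul, Matrix.mul_zero, Matrix.mul_zero]
  rw [hR', frobNorm_add_sq_of_conjTranspose_mul_eq_zero horth,
    frobNorm_mul_mul_conjTranspose hU1 hVm, frobNorm_mul_mul_conjTranspose hUm hV1]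

/-- Cheap Frobenius-norm residual formula for the Galerkin approximation from block Arnoldi:
`‖R‖_F² = ‖H_{m+1,m} E_m* Y‖_F² + ‖Y E_m G_{m+1,m}*‖_F²`. -/
theorem sylvester_residual_frobenius_norm {n m s : ℕ} (hm : 0 < m)
    (Um Vm : Matrix (Fin n) (Fin m × Fin s) ℂ)
    (U1 V1 : Matrix (Fin n) (Fin s) ℂ)
    (Y : Matrix (Fin m × Fin s) (Fin m × Fin s) ℂ)
    (H1 G1 : Matrix (Fin s) (Fin s) ℂ)
    (R : Matrix (Fin n) (Fin n) ℂ)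
    (hUm : Umᴴ * Um = 1) (hVm : Vmᴴ * Vm = 1)
    (hU1 : U1ᴴ * U1 = 1) (hV1 : V1ᴴ * V1 = 1)
    (hUorth : U1ᴴ * Um = 0) (hVorth : V1ᴴ * Vm = 0)
    (hR : R = U1 * H1 * (Em m s)ᴴ * Y * Vmᴴ + Um * Y * (Em m s) * G1ᴴ * V1ᴴ) :
    frobNorm R ^ 2
      = frobNorm (H1 * (Em m s)ᴴ * Y) ^ 2 + frobNorm (Y * (Em m s) * G1ᴴ) ^ 2 :=
  sylvester_residual_frobenius_norm_general Um Vm U1 V1 Y H1 G1 R hUm hVm hU1 hV1 hUorth hR
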